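/- Let R > 0, let c = −4 coth²(R/2) log cosh(R/2), and define u : (0, R] → ℝ by u(r) = 2(log cosh(r/2))² − 2(log cosh(R/2))² + Li₂(tanh²(r/2)) − Li₂(tanh²(R/2)) + c·log( cosh(r/2)/cosh(R/2) ). Then 2π ∫₀^R u(r) sinh r dr = 4π ( sinh²(R/2) − 4 coth²(R/2) (log cosh(R/2))² ). -/

import Mathlib

/-!
Write `L r = log cosh (r/2)` and `Λ r = Li₂ (tanh² (r/2))`. Since `1 - tanh² = cosh⁻²`, the
chain rule gives `Λ' r = 4 L r / sinh r`, so integrating `Λ r · sinh r` by parts against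
`cosh r - 1 = tanh (r/2) · sinh r` leaves only `∫ 4 L tanh (r/2) = 4 L²`. Because
`L' = tanh (r/2) / 2` and `(cosh r + 1) tanh (r/2) = sinh r`, the remaining terms `L · sinh` and
`L² · sinh` of `u · sinh` have elementary primitives as well. In the sum of the three closed forms
the values of `Li₂` cancel, and what is left collapses by `cosh² = 1 + sinh²`.
-/

open MeasureTheory Real

/-- The dilogarithm, defined for real `x ≤ 1` by `Li₂(x) = −∫₀ˣ log(1−t)/t dt`. -/
noncomputable def Li2 (x : ℝ) : ℝ := - ∫ t in (0:ℝ)..x, Real.log (1 - t) / t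

open Set intervalIntegral

lemma abs_log_one_sub_div_le {b t : ℝ} (ht : t ∈ Icc 0 b) (hb : b < 1) :
    |log (1 - t) / t| ≤ (1 - b)⁻¹ := by
  rcases ht.1.eq_or_lt with rfl | ht0
  · simp only [div_zero, abs_zero]
    exact inv_nonneg.2 (by linarith)
  have h1t : 0 < 1 - t := by linarith [ht.2]
  have hlog := one_sub_inv_le_log_of_pos h1t
  rw [abs_div, abs_of_pos ht0, abs_of_nonpos (log_nonpos h1t.le (by linarith)), div_le_iff₀ ht0]
  calc -log (1 - t) ≤ t / (1 - t) := by
        have : (1 - t)⁻¹ - 1 = t / (1 - t) := by field_simp; ring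
        linarith
    _ ≤ t / (1 - b) := by gcongr; exact ht.2
    _ = (1 - b)⁻¹ * t := by ring

lemma intervalIntegrable_log_one_sub_div {b : ℝ} (hb0 : 0 ≤ b) (hb : b < 1) :
    IntervalIntegrable (fun t => log (1 - t) / t) volume 0 b := by
  rw [intervalIntegrable_iff_integrableOn_Icc_of_le hb0]
  refine Measure.integrableOn_of_bounded (M := (1 - b)⁻¹) measure_Icc_lt_top.ne
    (Measurable.aestronglyMeasurable (by fun_prop)) ?_
  exact (ae_restrict_iff' measurableSet_Icc).2 (.of_forall fun t ht => abs_log_one_sub_div_le ht hb)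

lemma hasDerivAt_Li2 {x : ℝ} (hx0 : 0 < x) (hx1 : x < 1) :
    HasDerivAt Li2 (-(log (1 - x) / x)) x := by
  refine (integral_hasDerivAt_right (intervalIntegrable_log_one_sub_div hx0.le hx1)
    (Measurable.stronglyMeasurable (by fun_prop)).stronglyMeasurableAtFilter ?_).neg
  exact ((continuousAt_const.sub continuousAt_id).log (sub_ne_zero.2 hx1.ne')).div
    continuousAt_id hx0.ne'

lemma continuousOn_Li2 : ContinuousOn Li2 (Ico 0 1) := by
  intro x hx
  obtain ⟨b, hxb, hb1⟩ := exists_between hx.2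
  have hwithin : ContinuousWithinAt Li2 (Icc 0 b) x := by
    refine (continuousWithinAt_primitive (measure_singleton x) ?_).neg
    simpa [hx.1.trans hxb.le] using intervalIntegrable_log_one_sub_div (hx.1.trans hxb.le) hb1
  refine hwithin.mono_of_mem_nhdsWithin (mem_nhdsWithin.2 ⟨Iio b, isOpen_Iio, hxb, ?_⟩)
  exact fun y ⟨hyb, hy⟩ => ⟨hy.1, le_of_lt hyb⟩

lemma Real.hasDerivAt_tanh (x : ℝ) : HasDerivAt tanh (cosh x ^ 2)⁻¹ x := by
  have h := (hasDerivAt_sinh x).div (hasDerivAt_cosh x) (cosh_pos x).ne'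
  rw [show sinh / cosh = tanh from funext fun y => (tanh_eq_sinh_div_cosh y).symm] at h
  refine h.congr_deriv ?_
  field_simp [(cosh_pos x).ne']
  linear_combination cosh_sq_sub_sinh_sq x

lemma log_one_sub_tanh_sq (x : ℝ) : log (1 - tanh x ^ 2) = -2 * log (cosh x) := by
  have h : 1 - tanh x ^ 2 = (cosh x ^ 2)⁻¹ := by
    rw [tanh_eq_sinh_div_cosh, div_pow, one_sub_div (pow_ne_zero 2 (cosh_pos x).ne'),
      cosh_sq_sub_sinh_sq, one_div]
  rw [h, log_inv, log_pow]
  push_cast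
  ring

lemma tanh_half_mul_sinh (r : ℝ) : tanh (r / 2) * sinh r = cosh r - 1 := by
  obtain ⟨s, rfl⟩ : ∃ s, r = 2 * s := ⟨r / 2, by ring⟩
  rw [mul_div_cancel_left₀ s two_ne_zero, sinh_two_mul, cosh_two_mul, tanh_eq_sinh_div_cosh]
  field_simp [(cosh_pos s).ne']
  linear_combination -(cosh_sq' s)

lemma cosh_add_one_mul_tanh_half (r : ℝ) : (cosh r + 1) * tanh (r / 2) = sinh r := by
  obtain ⟨s, rfl⟩ : ∃ s, r = 2 * s := ⟨r / 2, by ring⟩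
  rw [mul_div_cancel_left₀ s two_ne_zero, sinh_two_mul, cosh_two_mul, tanh_eq_sinh_div_cosh]
  field_simp [(cosh_pos s).ne']
  linear_combination -(sinh s) * cosh_sq' s

lemma hasDerivAt_log_cosh_half (r : ℝ) :
    HasDerivAt (fun r => log (cosh (r / 2))) (tanh (r / 2) / 2) r := by
  have h := ((hasDerivAt_cosh (r / 2)).comp r ((hasDerivAt_id r).div_const 2)).log
    (cosh_pos (r / 2)).ne'
  refine h.congr_deriv ?_
  simp only [Function.comp_apply, id_eq, tanh_eq_sinh_div_cosh]
  ring

lemma hasDerivAt_Li2_tanh_half_sq {r : ℝ} (hr : r ≠ 0) :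
    HasDerivAt (fun r => Li2 (tanh (r / 2) ^ 2)) (4 * log (cosh (r / 2)) / sinh r) r := by
  have hs : sinh (r / 2) ≠ 0 := by simpa using hr
  have hT : 0 < tanh (r / 2) ^ 2 := by
    rw [tanh_eq_sinh_div_cosh]; positivity
  have h := (hasDerivAt_Li2 hT (tanh_sq_lt_one _)).comp r
    (((hasDerivAt_tanh (r / 2)).comp r ((hasDerivAt_id r).div_const 2)).pow 2)
  refine h.congr_deriv ?_
  simp only [Function.comp_apply, id]
  obtain ⟨s, rfl⟩ : ∃ s, r = 2 * s := ⟨r / 2, by ring⟩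
  simp only [mul_div_cancel_left₀ s two_ne_zero] at hs ⊢
  have hc : cosh s ≠ 0 := (cosh_pos s).ne'
  rw [log_one_sub_tanh_sq, sinh_two_mul, tanh_eq_sinh_div_cosh]
  push_cast
  field_simp
  ring

@[fun_prop]
lemma Real.continuous_tanh : Continuous tanh :=
  continuous_iff_continuousAt.2 fun x => (hasDerivAt_tanh x).continuousAt

lemma continuous_Li2_tanh_half_sq : Continuous fun r => Li2 (tanh (r / 2) ^ 2) :=
  continuousOn_Li2.comp_continuous (by fun_prop) fun r => ⟨sq_nonneg _, tanh_sq_lt_one _⟩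

lemma integral_log_cosh_half_mul_sinh (R : ℝ) :
    ∫ r in 0..R, log (cosh (r / 2)) * sinh r
      = (cosh R + 1) * log (cosh (R / 2)) - (cosh R - 1) / 2 := by
  have hF : ∀ r ∈ uIcc 0 R, HasDerivAt (fun r => (cosh r + 1) * log (cosh (r / 2)) - cosh r / 2)
      (log (cosh (r / 2)) * sinh r) r := fun r _ => by
    refine ((((hasDerivAt_cosh r).add_const 1).mul (hasDerivAt_log_cosh_half r)).sub
      ((hasDerivAt_cosh r).div_const 2)).congr_deriv ?_
    linear_combination (cosh_add_one_mul_tanh_half r) / 2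
  rw [integral_eq_sub_of_hasDerivAt hF (Continuous.intervalIntegrable
    (by fun_prop (disch := intros; positivity)) _ _)]
  simp only [cosh_zero, zero_div, log_one]
  ring

lemma integral_log_cosh_half_sq_mul_sinh (R : ℝ) :
    ∫ r in 0..R, log (cosh (r / 2)) ^ 2 * sinh r
      = (cosh R + 1) * (log (cosh (R / 2)) ^ 2 - log (cosh (R / 2))) + (cosh R - 1) / 2 := by
  have hF : ∀ r ∈ uIcc 0 R, HasDerivAt
      (fun r => (cosh r + 1) * (log (cosh (r / 2)) ^ 2 - log (cosh (r / 2))) + cosh r / 2)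
      (log (cosh (r / 2)) ^ 2 * sinh r) r := fun r _ => by
    have hL := hasDerivAt_log_cosh_half r
    refine ((((hasDerivAt_cosh r).add_const 1).mul ((hL.fun_pow 2).fun_sub hL)).add
      ((hasDerivAt_cosh r).div_const 2)).congr_deriv ?_
    linear_combination (log (cosh (r / 2)) - 1 / 2) * cosh_add_one_mul_tanh_half r
  rw [integral_eq_sub_of_hasDerivAt hF (Continuous.intervalIntegrable
    (by fun_prop (disch := intros; positivity)) _ _)]
  simp only [cosh_zero, zero_div, log_one]
  ring

lemma integral_Li2_tanh_half_sq_mul_sinh {R : ℝ} (hR : 0 ≤ R) :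
    ∫ r in 0..R, Li2 (tanh (r / 2) ^ 2) * sinh r
      = (cosh R - 1) * Li2 (tanh (R / 2) ^ 2) - 4 * log (cosh (R / 2)) ^ 2 := by
  have hF : ∀ r ∈ Ioo 0 R, HasDerivAt
      (fun r => (cosh r - 1) * Li2 (tanh (r / 2) ^ 2) - 4 * log (cosh (r / 2)) ^ 2)
      (Li2 (tanh (r / 2) ^ 2) * sinh r) r := fun r hr => by
    have hs : sinh r ≠ 0 := (sinh_pos_iff.2 hr.1).ne'
    refine ((((hasDerivAt_cosh r).sub_const 1).mul (hasDerivAt_Li2_tanh_half_sq hr.1.ne')).sub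
      (((hasDerivAt_log_cosh_half r).pow 2).const_mul 4)).congr_deriv ?_
    rw [← tanh_half_mul_sinh]
    field_simp
    ring
  have hΛ := continuous_Li2_tanh_half_sq
  rw [integral_eq_sub_of_hasDerivAt_of_le hR
    (Continuous.continuousOn (by fun_prop (disch := intros; positivity))) hF
    ((hΛ.mul continuous_sinh).intervalIntegrable _ _)]
  simp

/-- Maximal mean deflection on a hyperbolic geodesic disk: the integral in geodesic
polar coordinates of the clamped-plate deflection `u` over the disk of radius `R`
in the hyperbolic plane equals `4π(sinh²(R/2) − 4coth²(R/2)(log cosh(R/2))²)`. -/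
theorem stmt_16 (R : ℝ) (hR0 : 0 < R)
    (c : ℝ) (hc : c = -4 * (Real.cosh (R/2) / Real.sinh (R/2))^2 * Real.log (Real.cosh (R/2)))
    (u : ℝ → ℝ)
    (hu : ∀ r, u r = 2 * (Real.log (Real.cosh (r/2)))^2 - 2 * (Real.log (Real.cosh (R/2)))^2
        + Li2 ((Real.tanh (r/2))^2) - Li2 ((Real.tanh (R/2))^2)
        + c * Real.log (Real.cosh (r/2) / Real.cosh (R/2))) :
    2 * π * ∫ r in (0:ℝ)..R, u r * Real.sinh r
      = 4 * π * ((Real.sinh (R/2))^2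
          - 4 * (Real.cosh (R/2) / Real.sinh (R/2))^2 * (Real.log (Real.cosh (R/2)))^2) := by
  set K := 2 * log (cosh (R / 2)) ^ 2 + Li2 (tanh (R / 2) ^ 2) + c * log (cosh (R / 2)) with hK
  have hsplit : ∀ r, u r * sinh r = 2 * (log (cosh (r / 2)) ^ 2 * sinh r)
      + Li2 (tanh (r / 2) ^ 2) * sinh r + c * (log (cosh (r / 2)) * sinh r) - K * sinh r := by
    intro r
    rw [hu, log_div (cosh_pos _).ne' (cosh_pos _).ne']
    ring
  have hsinh : ∫ r in 0..R, sinh r = cosh R - 1 := by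
    rw [integral_eq_sub_of_hasDerivAt (fun r _ => hasDerivAt_cosh r)
      (continuous_sinh.intervalIntegrable _ _), cosh_zero]
  have hcosh : cosh R = 2 * sinh (R / 2) ^ 2 + 1 := by
    have h := cosh_two_mul (R / 2)
    rw [mul_div_cancel₀ R two_ne_zero, cosh_sq'] at h
    linarith
  have hs : sinh (R / 2) ≠ 0 := (sinh_pos_iff.2 (half_pos hR0)).ne'
  have hΛ := continuous_Li2_tanh_half_sq
  simp_rw [hsplit]
  rw [intervalIntegral.integral_sub, intervalIntegral.integral_add, intervalIntegral.integral_add,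
    intervalIntegral.integral_const_mul, intervalIntegral.integral_const_mul,
    intervalIntegral.integral_const_mul, integral_log_cosh_half_sq_mul_sinh,
    integral_log_cosh_half_mul_sinh, integral_Li2_tanh_half_sq_mul_sinh hR0.le, hsinh]
  · rw [hcosh, hK, hc]
    field_simp
    linear_combination 8 * sinh (R / 2) ^ 2 * log (cosh (R / 2)) * cosh_sq' (R / 2)
  all_goals exact Continuous.intervalIntegrable (by fun_prop (disch := intros; positivity)) _ _
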